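/- In Euclidean m-space with two agents, let f be a deterministic, unanimous, translation-invariant, strategyproof mechanism, and assume the established structural facts: moving an agent along the segment toward the output preserves the output (Lemma 2), and the output always lies on the sphere with the two agents' segment as diameter (Theorem 2). Then f is scalable: f(kA, kB) = k·f(A, B) for all k > 0 and all A, B ∈ ℝ^m. -/

import Mathlib

/-!
Translate so that the first agent sits at the origin. For `0 < k < 1` and `W = f 0 C`, moving
the first agent from `0` to `(1 - k) • W` along `[0, W]`, and then the second agent from `C` to
`k • C + (1 - k) • W` along `[C, W]`, keeps the output at `W`; translating back by `(1 - k) • W`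
gives `f 0 (k • C) = k • W`. Scaling by `k > 1` is the inverse of scaling by `1 / k`.
-/

section

variable {V : Type*} [AddCommGroup V] {f : V → V → V}

lemma apply_eq_apply_zero_sub_add (htrans : ∀ A B t, f (A + t) (B + t) = f A B + t) (A B : V) :
    f A B = f 0 (B - A) + A := by
  simpa using htrans 0 (B - A) A

variable [Module ℝ V]

lemma smul_apply_of_smul_apply_of_lt_one {g : V → V}
    (hg : ∀ k : ℝ, 0 < k → k < 1 → ∀ C, g (k • C) = k • g C) {k : ℝ} (hk : 0 < k) (C : V) :
    g (k • C) = k • g C := by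
  rcases lt_trichotomy k 1 with hlt | rfl | hgt
  · exact hg k hk hlt C
  · simp only [one_smul]
  · have hinv : g C = k⁻¹ • g (k • C) := by
      simpa [smul_smul, inv_mul_cancel₀ hk.ne'] using
        hg k⁻¹ (inv_pos.mpr hk) (inv_lt_one_of_one_lt₀ hgt) (k • C)
    rw [hinv, smul_smul, mul_inv_cancel₀ hk.ne', one_smul]

lemma apply_zero_smul_of_lt_one (htrans : ∀ A B t, f (A + t) (B + t) = f A B + t)
    (hseg1 : ∀ A B P, P ∈ segment ℝ A (f A B) → f P B = f A B)
    (hseg2 : ∀ A B P, P ∈ segment ℝ B (f A B) → f A P = f A B)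
    {k : ℝ} (hk : 0 < k) (hk1 : k < 1) (C : V) :
    f 0 (k • C) = k • f 0 C := by
  set W := f 0 C
  have hmoveA : f ((1 - k) • W) C = W :=
    hseg1 0 C _ ⟨k, 1 - k, hk.le, by linarith, by ring, by rw [smul_zero, zero_add]⟩
  have hmoveB : f ((1 - k) • W) (k • C + (1 - k) • W) = W := by
    have hsegB := hseg2 ((1 - k) • W) C (k • C + (1 - k) • W)
    rw [hmoveA] at hsegB
    exact hsegB ⟨k, 1 - k, hk.le, by linarith, by ring, rfl⟩
  have htranslate := htrans 0 (k • C) ((1 - k) • W)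
  rw [zero_add, hmoveB] at htranslate
  rw [eq_sub_of_add_eq htranslate.symm, sub_smul, one_smul, sub_sub_cancel]

end

theorem stmt17_general {m : ℕ}
    (f : EuclideanSpace ℝ (Fin m) → EuclideanSpace ℝ (Fin m) → EuclideanSpace ℝ (Fin m))
    (htrans : ∀ A B t, f (A + t) (B + t) = f A B + t)
    (hseg1 : ∀ A B P, P ∈ segment ℝ A (f A B) → f P B = f A B)
    (hseg2 : ∀ A B P, P ∈ segment ℝ B (f A B) → f A P = f A B) :
    ∀ (k : ℝ), 0 < k → ∀ A B, f (k • A) (k • B) = k • f A B := by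
  intro k hk A B
  have hscale : ∀ C, f 0 (k • C) = k • f 0 C :=
    smul_apply_of_smul_apply_of_lt_one
      (fun k hk hk1 C => apply_zero_smul_of_lt_one htrans hseg1 hseg2 hk hk1 C) hk
  rw [apply_eq_apply_zero_sub_add htrans, apply_eq_apply_zero_sub_add htrans A B, ← smul_sub,
    hscale, smul_add]

/-- A deterministic, unanimous, translation-invariant, strategyproof
two-agent mechanism in Euclidean m-space — given that moving an agent along the
segment toward the output preserves the output, and that the output lies on the
sphere with the agents' segment as diameter — is scalable. -/
theorem stmt17 {m : ℕ}
    (f : EuclideanSpace ℝ (Fin m) → EuclideanSpace ℝ (Fin m) → EuclideanSpace ℝ (Fin m))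
    (hsp1 : ∀ A A' B, ‖f A B - A‖ ≤ ‖f A' B - A‖)
    (hsp2 : ∀ A B B', ‖f A B - B‖ ≤ ‖f A B' - B‖)
    (huna : ∀ C, f C C = C)
    (htrans : ∀ A B t, f (A + t) (B + t) = f A B + t)
    (hseg1 : ∀ A B P, P ∈ segment ℝ A (f A B) → f P B = f A B)
    (hseg2 : ∀ A B P, P ∈ segment ℝ B (f A B) → f A P = f A B)
    (hsphere : ∀ A B, (inner ℝ (A - f A B) (B - f A B) : ℝ) = 0) :
    ∀ (k : ℝ), 0 < k → ∀ A B, f (k • A) (k • B) = k • f A B :=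
  stmt17_general f htrans hseg1 hseg2
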